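/- Let X ~ N(0, σ_X²) and N ~ N(0, σ_N²) be independent with 3σ_N² ≥ σ_X², and Y = X + N. For every a > 0, the map b ↦ ℓ(X → (a,b)) = log[(2Φ((b−a)/(2σ_N)) − 1)/(Φ(b/σ_Y) − Φ(a/σ_Y))] is strictly increasing on (a, ∞), and lim_{b→∞} ℓ(X → (a,b)) = log(1/P(Y > a)) = −log(1 − Φ(a/σ_Y)). -/

import Mathlib

open Real Set MeasureTheory Filter

/-- Standard normal density. -/
noncomputable def stdGaussPDF (x : ℝ) : ℝ := (Real.sqrt (2 * Real.pi))⁻¹ * Real.exp (-x ^ 2 / 2)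

/-- Standard normal CDF. -/
noncomputable def stdGaussCDF (x : ℝ) : ℝ := ∫ t in Set.Iic x, stdGaussPDF t

lemma pdf_pos (x : ℝ) : 0 < stdGaussPDF x := by
  unfold stdGaussPDF
  positivity

lemma pdf_cont : Continuous stdGaussPDF := by
  unfold stdGaussPDF
  fun_prop

lemma pdf_integrable : Integrable stdGaussPDF := by
  unfold stdGaussPDF
  have h : Integrable (fun x : ℝ => Real.exp (-(1/2 : ℝ) * x ^ 2)) :=
    integrable_exp_neg_mul_sq (by norm_num)
  have := h.const_mul (Real.sqrt (2 * Real.pi))⁻¹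
  refine this.congr ?_
  filter_upwards with x
  ring_nf

lemma pdf_total : ∫ x, stdGaussPDF x = 1 := by
  unfold stdGaussPDF
  rw [MeasureTheory.integral_const_mul]
  have : ∀ x : ℝ, Real.exp (-x ^ 2 / 2) = Real.exp (-(1/2 : ℝ) * x ^ 2) := by
    intro x; ring_nf
  simp_rw [this]
  rw [integral_gaussian]
  rw [inv_mul_eq_one₀ (by positivity)]
  rw [show (2:ℝ)*Real.pi = Real.pi/(1/2) by ring]

lemma pdf_even (x : ℝ) : stdGaussPDF (-x) = stdGaussPDF x := by
  unfold stdGaussPDF; ring_nf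

lemma cdf_sub (x y : ℝ) :
    stdGaussCDF y - stdGaussCDF x = ∫ t in x..y, stdGaussPDF t :=
  intervalIntegral.integral_Iic_sub_Iic pdf_integrable.integrableOn pdf_integrable.integrableOn

lemma cdf_strictMono : StrictMono stdGaussCDF := by
  intro x y hxy
  have h : 0 < ∫ t in x..y, stdGaussPDF t :=
    intervalIntegral.intervalIntegral_pos_of_pos (pdf_integrable.intervalIntegrable)
      pdf_pos hxy
  have := cdf_sub x y
  linarith

lemma cdf_le_one (x : ℝ) : stdGaussCDF x ≤ 1 := by
  rw [← pdf_total]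
  exact setIntegral_le_integral pdf_integrable
    (Filter.Eventually.of_forall fun t => (pdf_pos t).le)

lemma cdf_lt_one (x : ℝ) : stdGaussCDF x < 1 :=
  lt_of_lt_of_le (cdf_strictMono (lt_add_one x)) (cdf_le_one _)

lemma cdf_zero : stdGaussCDF 0 = 1 / 2 := by
  have h1 : stdGaussCDF 0 = ∫ t in Set.Ioi (0:ℝ), stdGaussPDF t := by
    unfold stdGaussCDF
    have he : (∫ t in Set.Iic (0:ℝ), stdGaussPDF t) = ∫ t in Set.Iic (0:ℝ), stdGaussPDF (-t) := by
      simp_rw [pdf_even]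
    rw [he, integral_comp_neg_Iic, neg_zero]
  have h2 : stdGaussCDF 0 + ∫ t in Set.Ioi (0:ℝ), stdGaussPDF t = 1 := by
    unfold stdGaussCDF
    rw [intervalIntegral.integral_Iic_add_Ioi pdf_integrable.integrableOn
      pdf_integrable.integrableOn, pdf_total]
  rw [h1] at h2 ⊢
  linarith

lemma cdf_eq (x : ℝ) : stdGaussCDF x = stdGaussCDF 0 + ∫ t in (0:ℝ)..x, stdGaussPDF t := by
  have := cdf_sub 0 x
  linarith

lemma cdf_hasDeriv (x : ℝ) : HasDerivAt stdGaussCDF (stdGaussPDF x) x := by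
  have h : HasDerivAt (fun y => ∫ t in (0:ℝ)..y, stdGaussPDF t) (stdGaussPDF x) x :=
    intervalIntegral.integral_hasDerivAt_right (pdf_integrable.intervalIntegrable)
      (pdf_cont.stronglyMeasurableAtFilter _ _) pdf_cont.continuousAt
  have h2 := h.const_add (stdGaussCDF 0)
  refine h2.congr_of_eventuallyEq ?_
  filter_upwards with y
  exact cdf_eq y

lemma cdf_tendsto_one : Filter.Tendsto stdGaussCDF Filter.atTop (nhds 1) := by
  have h : Filter.Tendsto (fun x => stdGaussCDF 0 + ∫ t in (0:ℝ)..x, stdGaussPDF t)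
      Filter.atTop (nhds (stdGaussCDF 0 + ∫ t in Set.Ioi (0:ℝ), stdGaussPDF t)) := by
    exact (MeasureTheory.intervalIntegral_tendsto_integral_Ioi 0
      pdf_integrable.integrableOn tendsto_id).const_add _
  have he : (fun x => stdGaussCDF 0 + ∫ t in (0:ℝ)..x, stdGaussPDF t) = stdGaussCDF :=
    funext fun x => (cdf_eq x).symm
  rw [he] at h
  have hval : stdGaussCDF 0 + ∫ t in Set.Ioi (0:ℝ), stdGaussPDF t = 1 := by
    unfold stdGaussCDF
    rw [intervalIntegral.integral_Iic_add_Ioi pdf_integrable.integrableOn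
      pdf_integrable.integrableOn, pdf_total]
  rwa [hval] at h

lemma pdf_mul (p q : ℝ) :
    stdGaussPDF p * stdGaussPDF q
      = ((Real.sqrt (2 * Real.pi))⁻¹) ^ 2 * Real.exp (-p ^ 2 / 2 + -q ^ 2 / 2) := by
  unfold stdGaussPDF
  rw [Real.exp_add]
  ring

lemma pdf_mul_le {p q r s : ℝ} (h : r ^ 2 + s ^ 2 ≤ p ^ 2 + q ^ 2) :
    stdGaussPDF p * stdGaussPDF q ≤ stdGaussPDF r * stdGaussPDF s := by
  rw [pdf_mul, pdf_mul]
  have : Real.exp (-p ^ 2 / 2 + -q ^ 2 / 2) ≤ Real.exp (-r ^ 2 / 2 + -s ^ 2 / 2) :=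
    Real.exp_le_exp.2 (by linarith)
  exact mul_le_mul_of_nonneg_left this (by positivity)

lemma pdf_mul_lt {p q r s : ℝ} (h : r ^ 2 + s ^ 2 < p ^ 2 + q ^ 2) :
    stdGaussPDF p * stdGaussPDF q < stdGaussPDF r * stdGaussPDF s := by
  rw [pdf_mul, pdf_mul]
  have : Real.exp (-p ^ 2 / 2 + -q ^ 2 / 2) < Real.exp (-r ^ 2 / 2 + -s ^ 2 / 2) :=
    Real.exp_lt_exp.2 (by linarith)
  exact mul_lt_mul_of_pos_left this (by positivity)

/-- The fundamental argument inequality. -/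
lemma arg_ineq (σX σN σY a b x : ℝ) (hσX : 0 < σX) (hσN : 0 < σN)
    (hcond : 3 * σN ^ 2 ≥ σX ^ 2) (hσY2 : σY ^ 2 = σX ^ 2 + σN ^ 2) (hσY : 0 < σY)
    (ha : 0 < a) (hax : a < x) (hxb : x ≤ b) :
    ((b - a) / (2 * σN)) ^ 2 + (x / σY) ^ 2
      ≤ (b / σY) ^ 2 + ((x - a) / (2 * σN)) ^ 2 := by
  have hA : (0:ℝ) < (2 * σN) ^ 2 := by positivity
  have hB : (0:ℝ) < σY ^ 2 := by positivity
  have h1 : ((b - a) ^ 2 - (x - a) ^ 2) / (2 * σN) ^ 2 ≤ (b ^ 2 - x ^ 2) / σY ^ 2 := by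
    rw [div_le_div_iff₀ hA hB]
    nlinarith [mul_nonneg (sub_nonneg.2 hxb)
      (show (0:ℝ) ≤ (3 * σN ^ 2 - σX ^ 2) * (b + x) + 2 * a * (σX ^ 2 + σN ^ 2) by nlinarith)]
  rw [sub_div, sub_div] at h1
  rw [div_pow, div_pow, div_pow, div_pow]
  linarith

lemma arg_ineq_strict (σX σN σY a b : ℝ) (hσX : 0 < σX) (hσN : 0 < σN)
    (hcond : 3 * σN ^ 2 ≥ σX ^ 2) (hσY2 : σY ^ 2 = σX ^ 2 + σN ^ 2) (hσY : 0 < σY)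
    (ha : 0 < a) (hab : a < b) :
    ((b - a) / (2 * σN)) ^ 2 + (((a + b) / 2) / σY) ^ 2
      < (b / σY) ^ 2 + (((a + b) / 2 - a) / (2 * σN)) ^ 2 := by
  obtain ⟨x, hx⟩ : ∃ x : ℝ, x = (a + b) / 2 := ⟨_, rfl⟩
  rw [← hx]
  have hax : a < x := by rw [hx]; linarith
  have hxb : x < b := by rw [hx]; linarith
  have hA : (0:ℝ) < (2 * σN) ^ 2 := by positivity
  have hB : (0:ℝ) < σY ^ 2 := by positivity
  have h1 : ((b - a) ^ 2 - (x - a) ^ 2) / (2 * σN) ^ 2 < (b ^ 2 - x ^ 2) / σY ^ 2 := by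
    rw [div_lt_div_iff₀ hA hB]
    nlinarith [mul_pos (sub_pos.2 hxb)
      (show (0:ℝ) < (3 * σN ^ 2 - σX ^ 2) * (b + x) + 2 * a * (σX ^ 2 + σN ^ 2) by nlinarith)]
  rw [sub_div, sub_div] at h1
  rw [div_pow, div_pow, div_pow, div_pow]
  linarith

/-- Integral representation of the denominator. -/
lemma D_repr (σY a b : ℝ) (hσY : 0 < σY) :
    σY * (stdGaussCDF (b / σY) - stdGaussCDF (a / σY))
      = ∫ x in a..b, stdGaussPDF (x / σY) := by
  have h := intervalIntegral.inv_mul_integral_comp_div (f := stdGaussPDF) (a := a) (b := b) σY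
  rw [cdf_sub, ← h, ← mul_assoc, mul_inv_cancel₀ hσY.ne', one_mul]

/-- Integral representation of the numerator. -/
lemma N_repr (σN a b : ℝ) (hσN : 0 < σN) :
    σN * (2 * stdGaussCDF ((b - a) / (2 * σN)) - 1)
      = ∫ x in a..b, stdGaussPDF (x / (2 * σN) - a / (2 * σN)) := by
  have h1 : 2 * stdGaussCDF ((b - a) / (2 * σN)) - 1
      = 2 * (stdGaussCDF ((b - a) / (2 * σN)) - stdGaussCDF 0) := by
    rw [cdf_zero]; ring
  rw [h1, cdf_sub]
  have h2 := intervalIntegral.inv_mul_integral_comp_div_sub (f := stdGaussPDF) (a := a) (b := b)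
    (2 * σN) (a / (2 * σN))
  have e0 : a / (2 * σN) - a / (2 * σN) = (0:ℝ) := by ring
  have e1 : b / (2 * σN) - a / (2 * σN) = (b - a) / (2 * σN) := by ring
  rw [e0, e1] at h2
  rw [← h2]
  have h2σN : (2 * σN) ≠ 0 := by positivity
  field_simp

/-- The key derivative inequality in cross-multiplied form. -/
lemma key_ineq (σX σN σY a b : ℝ) (hσX : 0 < σX) (hσN : 0 < σN)
    (hcond : 3 * σN ^ 2 ≥ σX ^ 2) (hσY2 : σY ^ 2 = σX ^ 2 + σN ^ 2) (hσY : 0 < σY)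
    (ha : 0 < a) (hab : a < b) :
    stdGaussPDF (b / σY) * (σN * (2 * stdGaussCDF ((b - a) / (2 * σN)) - 1))
      < stdGaussPDF ((b - a) / (2 * σN)) * (σY * (stdGaussCDF (b / σY) - stdGaussCDF (a / σY))) := by
  rw [N_repr σN a b hσN, D_repr σY a b hσY,
    ← intervalIntegral.integral_const_mul, ← intervalIntegral.integral_const_mul]
  apply intervalIntegral.integral_lt_integral_of_continuousOn_of_le_of_exists_lt hab
  · exact (continuous_const.mul (pdf_cont.comp (by fun_prop))).continuousOn
  · exact (continuous_const.mul (pdf_cont.comp (by fun_prop))).continuousOn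
  · intro x hx
    apply pdf_mul_le
    have := arg_ineq σX σN σY a b x hσX hσN hcond hσY2 hσY ha hx.1 hx.2
    have e : x / (2 * σN) - a / (2 * σN) = (x - a) / (2 * σN) := by ring
    rw [e]
    linarith
  · refine ⟨(a + b) / 2, ⟨by linarith, by linarith⟩, ?_⟩
    apply pdf_mul_lt
    have := arg_ineq_strict σX σN σY a b hσX hσN hcond hσY2 hσY ha hab
    have e : (a + b) / 2 / (2 * σN) - a / (2 * σN) = ((a + b) / 2 - a) / (2 * σN) := by ring
    rw [e]
    linarith

/-- For the Gaussian mechanism with Gaussian prior and `3σ_N² ≥ σ_X²`, the interval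
leakage `b ↦ ℓ(X → (a,b)) = log[(2Φ((b−a)/(2σ_N)) − 1)/(Φ(b/σ_Y) − Φ(a/σ_Y))]` is
strictly increasing on `(a, ∞)` for every `a > 0`, with limit
`−log(1 − Φ(a/σ_Y)) = log(1/P(Y > a))` as `b → ∞`. -/
theorem interval_leakage_increasing (σX σN : ℝ) (hσX : 0 < σX) (hσN : 0 < σN)
    (hcond : 3 * σN ^ 2 ≥ σX ^ 2)
    (σY : ℝ) (hσY : σY = Real.sqrt (σX ^ 2 + σN ^ 2))
    (a : ℝ) (ha : 0 < a) :
    StrictMonoOn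
      (fun b => Real.log ((2 * stdGaussCDF ((b - a) / (2 * σN)) - 1)
        / (stdGaussCDF (b / σY) - stdGaussCDF (a / σY)))) (Set.Ioi a) ∧
    Filter.Tendsto
      (fun b => Real.log ((2 * stdGaussCDF ((b - a) / (2 * σN)) - 1)
        / (stdGaussCDF (b / σY) - stdGaussCDF (a / σY))))
      Filter.atTop (nhds (-Real.log (1 - stdGaussCDF (a / σY)))) := by
  have hσYpos : 0 < σY := by
    rw [hσY]; exact Real.sqrt_pos.2 (by positivity)
  have hσY2 : σY ^ 2 = σX ^ 2 + σN ^ 2 := by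
    rw [hσY, Real.sq_sqrt (by positivity)]
  have hNpos : ∀ b, a < b → 0 < 2 * stdGaussCDF ((b - a) / (2 * σN)) - 1 := by
    intro b hb
    have h0 : (0:ℝ) < (b - a) / (2 * σN) := by
      have : 0 < b - a := by linarith
      positivity
    have := cdf_strictMono h0
    rw [cdf_zero] at this
    linarith
  have hDpos : ∀ b, a < b → 0 < stdGaussCDF (b / σY) - stdGaussCDF (a / σY) := by
    intro b hb
    have h0 : a / σY < b / σY := by gcongr
    have := cdf_strictMono h0
    linarith
  -- derivative data for g = log N - log D
  have hgdata : ∀ b ∈ Set.Ioi a, ∃ d : ℝ,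
      HasDerivAt (fun b => Real.log (2 * stdGaussCDF ((b - a) / (2 * σN)) - 1)
        - Real.log (stdGaussCDF (b / σY) - stdGaussCDF (a / σY))) d b ∧ 0 < d := by
    intro b hb
    have hb' : a < b := hb
    have hNb := hNpos b hb'
    have hDb := hDpos b hb'
    have haff : HasDerivAt (fun b : ℝ => (b - a) / (2 * σN)) (1 / (2 * σN)) b :=
      ((hasDerivAt_id b).sub_const a).div_const (2 * σN)
    have hN' : HasDerivAt (fun b => 2 * stdGaussCDF ((b - a) / (2 * σN)) - 1)
        (2 * (stdGaussPDF ((b - a) / (2 * σN)) * (1 / (2 * σN)))) b := by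
      have hc := (cdf_hasDeriv ((b - a) / (2 * σN))).comp b haff
      exact (hc.const_mul 2).sub_const 1
    have hdivY : HasDerivAt (fun b : ℝ => b / σY) (1 / σY) b :=
      (hasDerivAt_id b).div_const σY
    have hD' : HasDerivAt (fun b => stdGaussCDF (b / σY) - stdGaussCDF (a / σY))
        (stdGaussPDF (b / σY) * (1 / σY)) b :=
      ((cdf_hasDeriv (b / σY)).comp b hdivY).sub_const _
    refine ⟨_, (hN'.log hNb.ne').sub (hD'.log hDb.ne'), ?_⟩
    have hkey := key_ineq σX σN σY a b hσX hσN hcond hσY2 hσYpos ha hb'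
    have h1 : stdGaussPDF (b / σY) * (1 / σY) / (stdGaussCDF (b / σY) - stdGaussCDF (a / σY))
        < 2 * (stdGaussPDF ((b - a) / (2 * σN)) * (1 / (2 * σN)))
          / (2 * stdGaussCDF ((b - a) / (2 * σN)) - 1) := by
      rw [div_lt_div_iff₀ hDb hNb]
      have e1 : stdGaussPDF (b / σY) * (1 / σY) * (2 * stdGaussCDF ((b - a) / (2 * σN)) - 1)
          = (stdGaussPDF (b / σY) * (σN * (2 * stdGaussCDF ((b - a) / (2 * σN)) - 1)))
            * (σN * σY)⁻¹ := by
        field_simp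
      have e2 : 2 * (stdGaussPDF ((b - a) / (2 * σN)) * (1 / (2 * σN)))
            * (stdGaussCDF (b / σY) - stdGaussCDF (a / σY))
          = (stdGaussPDF ((b - a) / (2 * σN))
              * (σY * (stdGaussCDF (b / σY) - stdGaussCDF (a / σY))))
            * (σN * σY)⁻¹ := by
        field_simp
      rw [e1, e2]
      exact mul_lt_mul_of_pos_right hkey (by positivity)
    linarith
  constructor
  · -- strict monotonicity
    have hmono : StrictMonoOn
        (fun b => Real.log (2 * stdGaussCDF ((b - a) / (2 * σN)) - 1)
          - Real.log (stdGaussCDF (b / σY) - stdGaussCDF (a / σY))) (Set.Ioi a) := by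
      apply strictMonoOn_of_deriv_pos (convex_Ioi a)
      · intro b hb
        obtain ⟨d, hd, _⟩ := hgdata b hb
        exact hd.continuousAt.continuousWithinAt
      · intro b hb
        rw [interior_Ioi] at hb
        obtain ⟨d, hd, hdpos⟩ := hgdata b hb
        rw [hd.deriv]
        exact hdpos
    intro x hx y hy hxy
    have ex : Real.log ((2 * stdGaussCDF ((x - a) / (2 * σN)) - 1)
        / (stdGaussCDF (x / σY) - stdGaussCDF (a / σY)))
        = Real.log (2 * stdGaussCDF ((x - a) / (2 * σN)) - 1)
          - Real.log (stdGaussCDF (x / σY) - stdGaussCDF (a / σY)) :=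
      Real.log_div (hNpos x hx).ne' (hDpos x hx).ne'
    have ey : Real.log ((2 * stdGaussCDF ((y - a) / (2 * σN)) - 1)
        / (stdGaussCDF (y / σY) - stdGaussCDF (a / σY)))
        = Real.log (2 * stdGaussCDF ((y - a) / (2 * σN)) - 1)
          - Real.log (stdGaussCDF (y / σY) - stdGaussCDF (a / σY)) :=
      Real.log_div (hNpos y hy).ne' (hDpos y hy).ne'
    simp only [ex, ey]
    exact hmono hx hy hxy
  · -- limit
    have hu : Filter.Tendsto (fun b : ℝ => (b - a) / (2 * σN)) Filter.atTop Filter.atTop := by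
      apply Filter.Tendsto.atTop_div_const (by positivity)
      simpa [sub_eq_add_neg] using tendsto_atTop_add_const_right Filter.atTop (-a) tendsto_id
    have hv : Filter.Tendsto (fun b : ℝ => b / σY) Filter.atTop Filter.atTop :=
      tendsto_id.atTop_div_const hσYpos
    have hN : Filter.Tendsto (fun b => 2 * stdGaussCDF ((b - a) / (2 * σN)) - 1)
        Filter.atTop (nhds 1) := by
      have := ((cdf_tendsto_one.comp hu).const_mul 2).sub_const 1
      norm_num at this
      exact this
    have hD : Filter.Tendsto (fun b => stdGaussCDF (b / σY) - stdGaussCDF (a / σY))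
        Filter.atTop (nhds (1 - stdGaussCDF (a / σY))) :=
      (cdf_tendsto_one.comp hv).sub_const _
    have hdne : 1 - stdGaussCDF (a / σY) ≠ 0 := (sub_pos.2 (cdf_lt_one _)).ne'
    have hquot := hN.div hD hdne
    have hlog := hquot.log (by positivity)
    rwa [one_div, Real.log_inv] at hlog
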